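/- Let ℓ₁, ℓ₂ be positive integers and Gₙ as above. Then for 0 ≤ m ≠ n ≤ min(ℓ₁,ℓ₂), 𝓛(Gₘ Gₙ) = 0, and 𝓛(Gₙ²) = n! (-ℓ₂)ₙ (ℓ₁+ℓ₂+1-n) / ((-ℓ₁)ₙ (-ℓ₁-ℓ₂)ₙ (ℓ₁+ℓ₂+1-2n)). -/

import Mathlib

open Polynomial

/-- Pochhammer symbol `(a)_n = a(a+1)⋯(a+n-1)`. -/
def poch {R : Type*} [CommRing R] (a : R) (n : ℕ) : R :=
  ∏ i ∈ Finset.range n, (a + i)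

/-- The polynomial `Gₙ` (normalized Jacobi with negative integer parameters). -/
noncomputable def jacGpoly (l1 l2 : ℕ) (n : ℕ) : Polynomial ℚ :=
  ∑ k ∈ Finset.range (n + 1),
    C (poch (-(n : ℚ)) k * poch ((n : ℚ) - l1 - l2 - 1) k /
        (poch (-(l1 : ℚ)) k * (k.factorial : ℚ))) *
      ((1 - X) * C (1 / 2)) ^ k

/-!
Expanding `Gₙ` in powers of `y = (1 - x)/2`, the moment `𝓛(Gₙ yʲ)` is a balanced `₃F₂` at `1`,
which the Pfaff–Saalschütz identity (proved by the WZ method) evaluates to a multiple of `(-j)ₙ`.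
Hence `𝓛(Gₙ yʲ) = 0` for `j < n`, which is the orthogonality, and `𝓛(Gₙ²)` is the leading
coefficient of `Gₙ` times `𝓛(Gₙ yⁿ)`.
-/

open Finset

open scoped Nat

section Pochhammer

variable {R : Type*} [CommRing R]

theorem poch_zero (a : R) : poch a 0 = 1 :=
  prod_range_zero _

theorem poch_succ (a : R) (n : ℕ) : poch a (n + 1) = poch a n * (a + n) :=
  prod_range_succ _ _

theorem poch_add (a : R) (m n : ℕ) : poch a (m + n) = poch a m * poch (a + m) n := by
  simp only [poch, prod_range_add, Nat.cast_add, add_assoc]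

theorem poch_succ' (a : R) (n : ℕ) : poch a (n + 1) = a * poch (a + 1) n := by
  rw [add_comm n, poch_add, Nat.cast_one, poch, prod_range_one, Nat.cast_zero, add_zero]

theorem poch_add_one_mul (a : R) (n : ℕ) : poch (a + 1) n * a = poch a n * (a + n) := by
  rw [← poch_succ, poch_succ', mul_comm]

theorem poch_ne_zero_of_le {a : R} {k n : ℕ} (hkn : k ≤ n) (h : poch a n ≠ 0) :
    poch a k ≠ 0 := by
  obtain ⟨d, rfl⟩ := Nat.exists_eq_add_of_le hkn
  exact left_ne_zero_of_mul (poch_add a k d ▸ h)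

theorem poch_ne_zero_iff [IsDomain R] {a : R} {n : ℕ} :
    poch a n ≠ 0 ↔ ∀ i < n, a + i ≠ 0 := by
  simp only [poch, prod_ne_zero_iff, mem_range]

theorem poch_neg_natCast_eq_zero {j n : ℕ} (h : j < n) : poch (-(j : R)) n = 0 :=
  prod_eq_zero (mem_range.2 h) (neg_add_cancel _)

theorem poch_neg_natCast_ne_zero [IsDomain R] [CharZero R] {l n : ℕ} (h : n ≤ l) :
    poch (-(l : R)) n ≠ 0 :=
  poch_ne_zero_iff.2 fun i hi => by
    rw [neg_add_eq_sub, sub_ne_zero]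
    exact_mod_cast (by omega : i ≠ l)

theorem poch_neg_natCast_self_mul (x : R) (n : ℕ) :
    poch (-(n : R)) n * poch (1 - x - n) n = n ! * poch x n := by
  induction n with
  | zero => simp [poch_zero]
  | succ n ih =>
    rw [poch_succ', poch_succ', poch_succ, show -((n + 1 : ℕ) : R) + 1 = -n by push_cast; ring,
      show 1 - x - ((n + 1 : ℕ) : R) + 1 = 1 - x - n by push_cast; ring, Nat.factorial_succ]
    push_cast
    linear_combination ((n + 1) * (x + n)) * ih

theorem poch_pos [PartialOrder R] [IsStrictOrderedRing R] {x : R} (hx : 0 < x) (n : ℕ) :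
    0 < poch x n :=
  prod_pos fun i _ => by positivity

end Pochhammer

section Saalschutz

variable {K : Type*} [Field K]

noncomputable def saalschutzTerm (a b c : K) (n k : ℕ) : K :=
  poch (-(n : K)) k * poch a k * poch b k /
    (poch c k * poch (1 + a + b - c - n) k * k !)

/-- WZ certificate of the Pfaff–Saalschütz sum. -/
noncomputable def saalschutzCert (a b c : K) (n k : ℕ) : K :=
  k * (1 - c - k) / ((n + 1) * (c + n)) * saalschutzTerm a b c (n + 1) k

theorem saalschutzTerm_succ_right (a b c : K) (n k : ℕ) :
    saalschutzTerm a b c n (k + 1) = saalschutzTerm a b c n k *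
      ((-n + k) * (a + k) * (b + k) / ((c + k) * (1 + a + b - c - n + k) * (k + 1))) := by
  simp only [saalschutzTerm, poch_succ, Nat.factorial_succ, Nat.cast_mul, Nat.cast_succ]
  rw [div_mul_div_comm]
  congr 1 <;> ring

theorem saalschutzTerm_eq_succ_mul [CharZero K] (a b c : K) (n k : ℕ)
    (h : a + b - c - n ≠ 0) :
    saalschutzTerm a b c n k = saalschutzTerm a b c (n + 1) k *
      ((k - n - 1) / (-n - 1) * ((a + b - c - n) / (a + b - c - n + k))) := by
  have hn : (-n - 1 : K) ≠ 0 := by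
    rw [← neg_add', neg_ne_zero]
    exact_mod_cast n.succ_ne_zero
  have hnum := poch_add_one_mul (-n - 1 : K) k
  have hden := poch_add_one_mul (a + b - c - n) k
  rw [sub_add_cancel] at hnum
  rw [saalschutzTerm, saalschutzTerm, eq_div_of_mul_eq hn hnum,
    show (1 + a + b - c - n : K) = a + b - c - n + 1 by ring, eq_div_of_mul_eq h hden]
  push_cast
  rw [neg_add', show 1 + a + b - c - (n + 1 : K) = a + b - c - n by ring]
  field_simp
  ring

theorem saalschutzTerm_succ_sub_eq_cert_sub [CharZero K] {a b c : K} {n k : ℕ} (hk : k ≤ n)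
    (hc : poch c (n + 1) ≠ 0) (hcab : poch (c - a - b) (n + 1) ≠ 0) :
    saalschutzTerm a b c (n + 1) k
        - (c - a + n) * (c - b + n) / ((c + n) * (c - a - b + n)) * saalschutzTerm a b c n k
      = saalschutzCert a b c n (k + 1) - saalschutzCert a b c n k := by
  have hck : c + k ≠ 0 := poch_ne_zero_iff.1 hc k (by omega)
  have hcn : c + n ≠ 0 := poch_ne_zero_iff.1 hc n (by omega)
  have hcabn : c - a - b + n ≠ 0 := poch_ne_zero_iff.1 hcab n (by omega)
  have hcabk : a + b - c - n + k ≠ 0 := by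
    have := poch_ne_zero_iff.1 hcab (n - k) (by omega)
    rw [Nat.cast_sub hk] at this
    contrapose! this
    linear_combination -this
  have he : a + b - c - n ≠ 0 := by
    contrapose! hcabn
    linear_combination -hcabn
  have hn : (n + 1 : K) ≠ 0 := Nat.cast_add_one_ne_zero n
  have hk1 : (k + 1 : K) ≠ 0 := Nat.cast_add_one_ne_zero k
  rw [saalschutzCert, saalschutzCert, saalschutzTerm_succ_right,
    saalschutzTerm_eq_succ_mul a b c n k he]
  generalize saalschutzTerm a b c (n + 1) k = T
  push_cast
  rw [show (1 + a + b - c - (n + 1) + k : K) = a + b - c - n + k by ring,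
    show (-n - 1 : K) = -(n + 1) by ring]
  field_simp
  ring

theorem sum_saalschutzTerm [CharZero K] {a b c : K} {n : ℕ} (hc : poch c n ≠ 0)
    (hcab : poch (c - a - b) n ≠ 0) :
    ∑ k ∈ range (n + 1), saalschutzTerm a b c n k
      = poch (c - a) n * poch (c - b) n / (poch c n * poch (c - a - b) n) := by
  induction n with
  | zero => simp [saalschutzTerm, poch_zero]
  | succ n ih =>
    have hcn : c + n ≠ 0 := poch_ne_zero_iff.1 hc n (by omega)
    have htele : ∑ k ∈ range (n + 1), (saalschutzTerm a b c (n + 1) k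
        - (c - a + n) * (c - b + n) / ((c + n) * (c - a - b + n)) * saalschutzTerm a b c n k)
          = saalschutzCert a b c n (n + 1) := by
      rw [sum_congr rfl fun k hk =>
          saalschutzTerm_succ_sub_eq_cert_sub (mem_range_succ_iff.1 hk) hc hcab,
        sum_range_sub, sub_eq_self]
      simp only [saalschutzCert, Nat.cast_zero, zero_mul, zero_div]
    have hcert : saalschutzCert a b c n (n + 1) = -saalschutzTerm a b c (n + 1) (n + 1) := by
      rw [saalschutzCert]
      push_cast
      field_simp
      ring
    rw [sum_sub_distrib, ← mul_sum, ih (poch_ne_zero_of_le n.le_succ hc)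
      (poch_ne_zero_of_le n.le_succ hcab), hcert] at htele
    have hratio : poch (c - a) (n + 1) * poch (c - b) (n + 1)
          / (poch c (n + 1) * poch (c - a - b) (n + 1))
        = (c - a + n) * (c - b + n) / ((c + n) * (c - a - b + n))
          * (poch (c - a) n * poch (c - b) n / (poch c n * poch (c - a - b) n)) := by
      simp only [poch_succ]
      rw [div_mul_div_comm]
      congr 1 <;> ring
    rw [sum_range_succ, hratio]
    linear_combination htele

end Saalschutz

section Jacobi

variable (l1 l2 : ℕ)

def HasJacGMoments (L : ℚ[X] →ₗ[ℚ] ℚ) : Prop :=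
  ∀ m : ℕ, m ≤ l1 + l2 →
    L (((1 - X) * C (1 / 2)) ^ m) = poch (-(l1 : ℚ)) m / poch (-(l1 : ℚ) - (l2 : ℚ)) m

noncomputable def jacGcoef (n k : ℕ) : ℚ :=
  poch (-(n : ℚ)) k * poch ((n : ℚ) - l1 - l2 - 1) k / (poch (-(l1 : ℚ)) k * (k ! : ℚ))

theorem map_jacGpoly_mul (L : ℚ[X] →ₗ[ℚ] ℚ) (n : ℕ) (p : ℚ[X]) :
    L (jacGpoly l1 l2 n * p)
      = ∑ k ∈ range (n + 1), jacGcoef l1 l2 n k * L (p * ((1 - X) * C (1 / 2)) ^ k) := by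
  rw [jacGpoly, sum_mul, map_sum]
  refine sum_congr rfl fun k _ => ?_
  rw [mul_assoc, C_mul', map_smul, smul_eq_mul, mul_comm (_ ^ k)]
  rfl

theorem jacGcoef_mul_moment_eq_saalschutzTerm (n j k : ℕ) :
    jacGcoef l1 l2 n k * (poch (-(l1 : ℚ)) (j + k) / poch (-(l1 : ℚ) - l2) (j + k))
      = poch (-(l1 : ℚ)) j / poch (-(l1 : ℚ) - l2) j
        * saalschutzTerm ((n : ℚ) - l1 - l2 - 1) ((j : ℚ) - l1) (-(l1 : ℚ)) n k := by
  rw [jacGcoef, saalschutzTerm, poch_add, poch_add,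
    show (1 + (n - l1 - l2 - 1) + (j - l1) - -l1 - n : ℚ) = -l1 - l2 + j by ring,
    show ((j : ℚ) - l1) = -l1 + j by ring]
  ring

variable {l1 l2} {L : ℚ[X] →ₗ[ℚ] ℚ}

theorem map_jacGpoly_mul_pow (hL : HasJacGMoments l1 l2 L) {n j : ℕ} (hn : n ≤ l1)
    (hnj : n + j ≤ l1 + l2) :
    L (jacGpoly l1 l2 n * ((1 - X) * C (1 / 2)) ^ j)
      = poch (-(l1 : ℚ)) j / poch (-(l1 : ℚ) - l2) j
        * (poch ((l2 : ℚ) + 1 - n) n * poch (-(j : ℚ)) n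
          / (poch (-(l1 : ℚ)) n * poch ((l1 : ℚ) + l2 + 1 - n - j) n)) := by
  have hpos : (0 : ℚ) < l1 + l2 + 1 - n - j := by
    have : (n : ℚ) + j ≤ l1 + l2 := by exact_mod_cast hnj
    linarith
  obtain ⟨hca, hcb, hcab⟩ : -(l1 : ℚ) - (n - l1 - l2 - 1) = l2 + 1 - n ∧
      -(l1 : ℚ) - (j - l1) = -j ∧
      -(l1 : ℚ) - (n - l1 - l2 - 1) - (j - l1) = l1 + l2 + 1 - n - j :=
    ⟨by ring, by ring, by ring⟩
  have hsum := sum_saalschutzTerm (a := (n : ℚ) - l1 - l2 - 1) (b := (j : ℚ) - l1)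
    (poch_neg_natCast_ne_zero hn) (hcab ▸ (poch_pos hpos n).ne')
  rw [hcab, hca, hcb] at hsum
  rw [map_jacGpoly_mul, ← hsum, mul_sum]
  refine sum_congr rfl fun k hk => ?_
  rw [← pow_add, hL _ (by have := mem_range_succ_iff.1 hk; omega),
    jacGcoef_mul_moment_eq_saalschutzTerm]

theorem map_jacGpoly_mul_pow_of_lt (hL : HasJacGMoments l1 l2 L) {n j : ℕ} (hjn : j < n)
    (hn1 : n ≤ l1) (hn2 : n ≤ l2) :
    L (jacGpoly l1 l2 n * ((1 - X) * C (1 / 2)) ^ j) = 0 := by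
  rw [map_jacGpoly_mul_pow hL hn1 (by omega), poch_neg_natCast_eq_zero hjn]
  simp

theorem map_jacGpoly_mul_jacGpoly_of_lt (hL : HasJacGMoments l1 l2 L) {m n : ℕ} (hmn : m < n)
    (hn1 : n ≤ l1) (hn2 : n ≤ l2) :
    L (jacGpoly l1 l2 m * jacGpoly l1 l2 n) = 0 := by
  rw [map_jacGpoly_mul]
  refine sum_eq_zero fun j hj => ?_
  rw [map_jacGpoly_mul_pow_of_lt hL (by have := mem_range_succ_iff.1 hj; omega) hn1 hn2,
    mul_zero]

theorem map_jacGpoly_mul_self (hL : HasJacGMoments l1 l2 L) {n : ℕ} (hn1 : n ≤ l1)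
    (hn2 : n ≤ l2) :
    L (jacGpoly l1 l2 n * jacGpoly l1 l2 n) =
      (n ! : ℚ) * poch (-(l2 : ℚ)) n * ((l1 : ℚ) + l2 + 1 - n) /
        (poch (-(l1 : ℚ)) n * poch (-(l1 : ℚ) - (l2 : ℚ)) n * ((l1 : ℚ) + l2 + 1 - 2 * n)) := by
  rw [map_jacGpoly_mul, sum_range_succ,
    sum_eq_zero fun j hj => by rw [map_jacGpoly_mul_pow_of_lt hL (mem_range.1 hj) hn1 hn2,
      mul_zero], zero_add, map_jacGpoly_mul_pow hL hn1 (by omega), jacGcoef]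
  set x : ℚ := l1 + l2 + 1 - 2 * n with hx_def
  have hx : 0 < x := by
    have : (n : ℚ) ≤ l1 := by exact_mod_cast hn1
    have : (n : ℚ) ≤ l2 := by exact_mod_cast hn2
    linarith
  have hcoef := poch_neg_natCast_self_mul (x + 1) n
  have hmoment := poch_neg_natCast_self_mul (-(l2 : ℚ)) n
  have hshift := poch_add_one_mul x n
  rw [show 1 - (x + 1) - n = (n : ℚ) - l1 - l2 - 1 by ring] at hcoef
  rw [show 1 - -(l2 : ℚ) - n = l2 + 1 - n by ring] at hmoment
  rw [show (l1 : ℚ) + l2 + 1 - n - n = x by ring]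
  have h1 : poch (-(l1 : ℚ)) n ≠ 0 := poch_neg_natCast_ne_zero hn1
  have h12 : poch (-(l1 : ℚ) - l2) n ≠ 0 := by
    rw [← neg_add', ← Nat.cast_add]
    exact poch_neg_natCast_ne_zero (by omega)
  have hxn : poch x n ≠ 0 := (poch_pos hx n).ne'
  field_simp
  linear_combination (poch (-(n : ℚ)) n * poch ((l2 : ℚ) + 1 - n) n * x) * hcoef
    + ((n ! : ℚ) * poch (x + 1) n * x) * hmoment + ((n ! : ℚ) ^ 2 * poch (-(l2 : ℚ)) n) * hshift
    + ((n ! : ℚ) ^ 2 * poch (-(l2 : ℚ)) n * poch x n) * hx_def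

end Jacobi

theorem jacG_orthogonality_general (l1 l2 : ℕ)
    (L : Polynomial ℚ →ₗ[ℚ] ℚ)
    (hL : ∀ m : ℕ, m ≤ l1 + l2 →
      L (((1 - X) * C (1 / 2)) ^ m) =
        poch (-(l1 : ℚ)) m / poch (-(l1 : ℚ) - (l2 : ℚ)) m)
    (m n : ℕ) (hm : m ≤ min l1 l2) (hn : n ≤ min l1 l2) :
    (m ≠ n → L (jacGpoly l1 l2 m * jacGpoly l1 l2 n) = 0) ∧
    L (jacGpoly l1 l2 n * jacGpoly l1 l2 n) =
      (n.factorial : ℚ) * poch (-(l2 : ℚ)) n * ((l1 : ℚ) + l2 + 1 - n) /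
        (poch (-(l1 : ℚ)) n * poch (-(l1 : ℚ) - (l2 : ℚ)) n *
          ((l1 : ℚ) + l2 + 1 - 2 * n)) := by
  rw [le_min_iff] at hm hn
  refine ⟨fun hmn => ?_, map_jacGpoly_mul_self hL hn.1 hn.2⟩
  rcases hmn.lt_or_gt with hlt | hgt
  · exact map_jacGpoly_mul_jacGpoly_of_lt hL hlt hn.1 hn.2
  · rw [mul_comm]
    exact map_jacGpoly_mul_jacGpoly_of_lt hL hgt hm.1 hm.2

theorem jacG_orthogonality (l1 l2 : ℕ) (h1 : 0 < l1) (h2 : 0 < l2)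
    (L : Polynomial ℚ →ₗ[ℚ] ℚ)
    (hL : ∀ m : ℕ, m ≤ l1 + l2 →
      L (((1 - X) * C (1 / 2)) ^ m) =
        poch (-(l1 : ℚ)) m / poch (-(l1 : ℚ) - (l2 : ℚ)) m)
    (m n : ℕ) (hm : m ≤ min l1 l2) (hn : n ≤ min l1 l2) :
    (m ≠ n → L (jacGpoly l1 l2 m * jacGpoly l1 l2 n) = 0) ∧
    L (jacGpoly l1 l2 n * jacGpoly l1 l2 n) =
      (n.factorial : ℚ) * poch (-(l2 : ℚ)) n * ((l1 : ℚ) + l2 + 1 - n) /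
        (poch (-(l1 : ℚ)) n * poch (-(l1 : ℚ) - (l2 : ℚ)) n *
          ((l1 : ℚ) + l2 + 1 - 2 * n)) :=
  jacG_orthogonality_general l1 l2 L hL m n hm hn
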